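/- Let k be an odd positive integer, k/2 < ℓ < k, and suppose the broadcasting process starts with ℓ red vertices among k roots. Let h_k = P{Beta((k+1)/2,(k+1)/2) ≥ 1 − 1/k}. Then for every mutation probability p ∈ [0,1] and every n ≥ 2ℓ, the probability that the majority color at time n differs from the initial majority satisfies P{b_n^{maj} ≠ b_k^{maj}} ≥ (1/2)·h_k^{2ℓ−k}. -/

import Mathlib

open Finset MeasureTheory Real

/-- `P{Bin(k,x) ≥ (k+1)/2}`: the upper tail of a binomial random variable
with `k` trials and success probability `x`. -/
noncomputable def binTail (k : ℕ) (x : ℝ) : ℝ :=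
  ∑ i ∈ Finset.Icc ((k + 1) / 2) k, (k.choose i : ℝ) * x ^ i * (1 - x) ^ (k - i)

/-- `h_k = P{Beta((k+1)/2,(k+1)/2) ≥ 1 − 1/k}`, written via the Beta density. -/
noncomputable def hBeta (k : ℕ) : ℝ :=
  (Real.Gamma ((k : ℝ) + 1) / (Real.Gamma (((k : ℝ) + 1) / 2)) ^ 2) *
    ∫ u in (1 - 1 / (k : ℝ))..1, (u * (1 - u)) ^ ((k - 1) / 2)

lemma term_hasDerivAt (k i : ℕ) (x : ℝ) :
    HasDerivAt (fun y : ℝ => (k.choose i : ℝ) * y ^ i * (1 - y) ^ (k - i))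
      ((k.choose i : ℝ) * ((i : ℝ) * x ^ (i-1) * (1-x) ^ (k-i)
        - ((k - i : ℕ) : ℝ) * x ^ i * (1-x) ^ (k-i-1))) x := by
  have h1 : HasDerivAt (fun y : ℝ => y ^ i) ((i : ℝ) * x ^ (i-1)) x := hasDerivAt_pow i x
  have h0 : HasDerivAt (fun y : ℝ => 1 - y) (-1 : ℝ) x := by
    simpa using (hasDerivAt_id x).const_sub 1
  have h2 : HasDerivAt (fun y : ℝ => (1 - y) ^ (k - i))
      (((k - i : ℕ) : ℝ) * (1-x) ^ (k-i-1) * (-1)) x :=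
    (hasDerivAt_pow (k-i) (1-x)).comp x h0
  have := (h1.mul h2).const_mul ((k.choose i : ℝ))
  have hf : (fun y : ℝ => (k.choose i : ℝ) * y ^ i * (1 - y) ^ (k - i))
      = fun y => (k.choose i : ℝ) * ((fun y : ℝ => y ^ i) * fun y : ℝ => (1 - y) ^ (k - i)) y := by
    funext y; simp only [Pi.mul_apply]; ring
  rw [hf]
  exact this.congr_deriv (by ring)

lemma binTail_hasDerivAt (k : ℕ) (hk : Odd k) (x : ℝ) :
    HasDerivAt (binTail k)
      ((k.choose ((k+1)/2) * ((k+1)/2) : ℕ) * (x*(1-x))^((k-1)/2)) x := by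
  obtain ⟨e, he⟩ := hk
  set m := (k+1)/2 with hm
  have hme : m = e + 1 := by omega
  set T : ℕ → ℝ := fun i => ((k.choose i * i : ℕ) : ℝ) * x ^ (i-1) * (1-x) ^ (k-i) with hT
  have hterm : ∀ i ∈ Finset.Icc m k,
      HasDerivAt (fun y : ℝ => (k.choose i : ℝ) * y ^ i * (1 - y) ^ (k - i))
        (T i - T (i+1)) x := by
    intro i hi
    have h := term_hasDerivAt k i x
    convert h using 1
    have hch : k.choose (i+1) * (i+1) = k.choose i * (k - i) := Nat.choose_succ_right_eq k i
    simp only [hT]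
    rw [hch]
    have : k - (i+1) = k - i - 1 := by omega
    rw [this]
    push_cast
    ring
  have hsum : HasDerivAt (binTail k) (∑ i ∈ Finset.Icc m k, (T i - T (i+1))) x := by
    exact HasDerivAt.fun_sum hterm
  have htel : ∑ i ∈ Finset.Icc m k, (T i - T (i+1)) = T m := by
    rw [show Finset.Icc m k = Finset.Ico m (k+1) by rw [Finset.Ico_add_one_right_eq_Icc], Finset.sum_Ico_eq_sum_range]
    calc ∑ j ∈ Finset.range (k + 1 - m), (T (m + j) - T (m + j + 1))
        = ∑ j ∈ Finset.range (k + 1 - m), ((fun j => T (m+j)) j - (fun j => T (m+j)) (j+1)) := by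
          apply Finset.sum_congr rfl; intro j _; simp [Nat.add_assoc]
      _ = T (m + 0) - T (m + (k + 1 - m)) := Finset.sum_range_sub' (fun j => T (m + j)) (k+1-m)
      _ = T m := by
          have h1 : m + (k + 1 - m) = k + 1 := by omega
          have h2 : T (k+1) = 0 := by
            simp [hT, Nat.choose_succ_self]
          rw [h1, h2, Nat.add_zero, sub_zero]
  rw [htel] at hsum
  convert hsum using 1
  have h1 : m - 1 = (k-1)/2 := by omega
  have h2 : k - m = (k-1)/2 := by omega
  simp only [hT, h1, h2]
  rw [mul_pow]
  push_cast
  ring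

lemma binTail_sub (k : ℕ) (hk : Odd k) (a b : ℝ) :
    binTail k b - binTail k a
      = ((k.choose ((k+1)/2) * ((k+1)/2) : ℕ) : ℝ) * ∫ u in a..b, (u*(1-u))^((k-1)/2) := by
  rw [← intervalIntegral.integral_const_mul]
  refine (intervalIntegral.integral_eq_sub_of_hasDerivAt (fun u _ => binTail_hasDerivAt k hk u) ?_).symm
  exact (Continuous.intervalIntegrable (by continuity) a b)

lemma binTail_zero (k : ℕ) (hk : 0 < k) : binTail k 0 = 0 := by
  apply Finset.sum_eq_zero
  intro i hi
  simp only [Finset.mem_Icc] at hi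
  have : i ≠ 0 := by omega
  simp [zero_pow this]

lemma binTail_one (k : ℕ) : binTail k 1 = 1 := by
  rw [binTail]
  rw [Finset.sum_eq_single_of_mem k (by simp [Finset.mem_Icc]; omega)]
  · simp
  · intro i hi hne
    simp only [Finset.mem_Icc] at hi
    have : k - i ≠ 0 := by omega
    simp [zero_pow this]

lemma coeff_eq (k : ℕ) (hk : Odd k) :
    ((k.choose ((k+1)/2) * ((k+1)/2) : ℕ) : ℝ)
      = Real.Gamma ((k : ℝ) + 1) / (Real.Gamma (((k : ℝ) + 1) / 2)) ^ 2 := by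
  obtain ⟨e, he⟩ := hk
  have h1 : ((k : ℝ) + 1) = ((k + 1 : ℕ) : ℝ) := by push_cast; ring
  have h2 : (((k : ℝ) + 1) / 2) = ((e : ℝ) + 1) := by subst he; push_cast; ring
  rw [h2]
  rw [show ((k:ℝ)+1) = ((k:ℕ):ℝ) + 1 from rfl, Real.Gamma_nat_eq_factorial,
    Real.Gamma_nat_eq_factorial]
  have hm : (k+1)/2 = e + 1 := by omega
  have hle : e + 1 ≤ k := by omega
  have key : k.choose (e+1) * Nat.factorial (e+1) * Nat.factorial (k - (e+1)) = Nat.factorial k :=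
    Nat.choose_mul_factorial_mul_factorial hle
  have hke : k - (e+1) = e := by omega
  rw [hke] at key
  have hfac : Nat.factorial (e+1) = (e+1) * Nat.factorial e := rfl
  rw [hfac] at key
  have hne : ((Nat.factorial e : ℝ)) ≠ 0 := by exact_mod_cast Nat.factorial_ne_zero e
  rw [hm]
  field_simp
  rw [← key]
  push_cast
  ring

lemma hBeta_eq (k : ℕ) (hk : Odd k) :
    hBeta k = ((k.choose ((k+1)/2) * ((k+1)/2) : ℕ) : ℝ) *
      ∫ u in (1 - 1/(k:ℝ))..1, (u * (1-u)) ^ ((k-1)/2) := by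
  rw [hBeta, coeff_eq k hk]

lemma hBeta_nonneg (k : ℕ) (hk : Odd k) (hk0 : 0 < k) : 0 ≤ hBeta k := by
  rw [hBeta_eq k hk]
  apply mul_nonneg (by positivity)
  have hk1 : (1:ℝ) ≤ k := by exact_mod_cast hk0
  have hinv : 1/(k:ℝ) ≤ 1 := by
    rw [div_le_one (by linarith)]; exact hk1
  have hinv0 : (0:ℝ) ≤ 1/(k:ℝ) := by positivity
  apply intervalIntegral.integral_nonneg (by linarith)
  intro u hu
  simp only [Set.mem_Icc] at hu
  have h2 : 0 ≤ u := by linarith [hu.1]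
  exact pow_nonneg (mul_nonneg h2 (by linarith [hu.2])) _

lemma hBeta_le (k : ℕ) (hk : Odd k) (hk0 : 0 < k) (x : ℝ) (hx0 : 0 ≤ x)
    (hx1 : x ≤ 1 - 1/(k:ℝ)) : hBeta k ≤ 1 - binTail k x := by
  have hone : (1 : ℝ) - binTail k x = binTail k 1 - binTail k x := by
    rw [binTail_one]
  rw [hone, binTail_sub k hk x 1]
  have hcont : ∀ a b : ℝ, IntervalIntegrable (fun u : ℝ => (u * (1-u)) ^ ((k-1)/2)) MeasureTheory.volume a b :=
    fun a b => (Continuous.intervalIntegrable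
      ((continuous_id.mul (continuous_const.sub continuous_id)).pow _) a b)
  have hsplit : (∫ u in x..1, (u * (1-u)) ^ ((k-1)/2))
      = (∫ u in x..(1 - 1/(k:ℝ)), (u * (1-u)) ^ ((k-1)/2))
        + ∫ u in (1 - 1/(k:ℝ))..1, (u * (1-u)) ^ ((k-1)/2) :=
    (intervalIntegral.integral_add_adjacent_intervals (hcont _ _) (hcont _ _)).symm
  rw [hsplit, hBeta_eq k hk]
  have hpos1 : (0:ℝ) ≤ ∫ u in x..(1 - 1/(k:ℝ)), (u * (1-u)) ^ ((k-1)/2) := by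
    apply intervalIntegral.integral_nonneg hx1
    intro u hu
    simp only [Set.mem_Icc] at hu
    have h1 : (0:ℝ) ≤ 1/(k:ℝ) := by positivity
    have h2 : 0 ≤ u := le_trans hx0 hu.1
    have h3 : u ≤ 1 := by linarith [hu.2]
    exact pow_nonneg (mul_nonneg h2 (by linarith)) _
  have hC : (0:ℝ) ≤ ((k.choose ((k+1)/2) * ((k+1)/2) : ℕ) : ℝ) := by positivity
  nlinarith [mul_nonneg hC hpos1]

lemma binTail_one_sub (k : ℕ) (hk : Odd k) (hk0 : 0 < k) (x : ℝ) :
    binTail k (1 - x) = 1 - binTail k x := by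
  have h1 : binTail k (1-x) - binTail k 0
      = ((k.choose ((k+1)/2) * ((k+1)/2) : ℕ) : ℝ) * ∫ u in (0:ℝ)..(1-x), (u*(1-u))^((k-1)/2) :=
    binTail_sub k hk 0 (1-x)
  have h2 : binTail k 1 - binTail k x
      = ((k.choose ((k+1)/2) * ((k+1)/2) : ℕ) : ℝ) * ∫ u in x..1, (u*(1-u))^((k-1)/2) :=
    binTail_sub k hk x 1
  have h3 : (∫ u in x..1, (u*(1-u))^((k-1)/2))
      = ∫ u in (0:ℝ)..(1-x), (u*(1-u))^((k-1)/2) := by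
    have := intervalIntegral.integral_comp_sub_left (a := x) (b := 1)
      (fun u : ℝ => (u*(1-u))^((k-1)/2)) 1
    simp only [sub_self] at this
    rw [← this]
    apply intervalIntegral.integral_congr
    intro u _
    simp only
    ring_nf
  rw [binTail_zero k hk0, sub_zero] at h1
  rw [binTail_one] at h2
  rw [h1, ← h3, ← h2]


/-- Cylinder event: the colors of vertices in `[k, m)` agree with `s`. -/
def cylEvent {Ω : Type*} (c : ℕ → Ω → Bool) (k m : ℕ) (s : ℕ → Bool) : Set Ω :=
  {ω | ∀ i ∈ Finset.Ico k m, c i ω = s i}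

lemma cyl_congr {Ω : Type*} (c : ℕ → Ω → Bool) (k m : ℕ) (s s' : ℕ → Bool)
    (h : ∀ i ∈ Finset.Ico k m, s i = s' i) :
    cylEvent c k m s = cylEvent c k m s' := by
  ext ω
  constructor <;> intro hω i hi
  · rw [← h i hi]; exact hω i hi
  · rw [h i hi]; exact hω i hi

lemma cyl_measurableSet {Ω : Type*} [MeasurableSpace Ω] (c : ℕ → Ω → Bool)
    (hmeas : ∀ i, Measurable (c i)) (k m : ℕ) (s : ℕ → Bool) :
    MeasurableSet (cylEvent c k m s) := by
  have : cylEvent c k m s = ⋂ i ∈ Finset.Ico k m, (c i) ⁻¹' {s i} := by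
    ext ω; simp [cylEvent]
  rw [this]
  exact MeasurableSet.biInter (Finset.Ico k m).countable_toSet
    (fun i _ => (hmeas i) (measurableSet_singleton _))

lemma cyl_comap {Ω : Type*} [MeasurableSpace Ω] (c : ℕ → Ω → Bool)
    (k m n : ℕ) (hmn : m ≤ n) (s : ℕ → Bool) :
    MeasurableSet[MeasurableSpace.comap (fun ω (i : Fin n) => c i ω) inferInstance]
      (cylEvent c k m s) := by
  refine ⟨{g : Fin n → Bool | ∀ i : Fin n, (i : ℕ) ∈ Finset.Ico k m → g i = s i}, ?_, ?_⟩
  · have : {g : Fin n → Bool | ∀ i : Fin n, (i : ℕ) ∈ Finset.Ico k m → g i = s i}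
        = ⋂ i : Fin n, ⋂ (_ : (i : ℕ) ∈ Finset.Ico k m),
            (fun g : Fin n → Bool => g i) ⁻¹' {s i} := by
      ext g; simp [Set.mem_iInter]
    rw [this]
    exact MeasurableSet.iInter fun i => MeasurableSet.iInter fun _ =>
      (measurable_pi_apply i) (measurableSet_singleton _)
  · ext ω
    simp only [Set.mem_preimage, Set.mem_setOf_eq, cylEvent]
    constructor
    · intro h i hi
      have hi' : i < n := lt_of_lt_of_le (Finset.mem_Ico.mp hi).2 hmn
      exact h ⟨i, hi'⟩ hi
    · intro h i hi; exact h _ hi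

lemma R_on_cyl {Ω : Type*} (c : ℕ → Ω → Bool) (k ℓ : ℕ) (hℓ : ℓ < k)
    (hinit : ∀ i < k, ∀ ω, c i ω = decide (i < ℓ))
    (R : ℕ → Ω → ℝ)
    (hR : ∀ n ω, R n ω =
      (((Finset.range n).filter (fun i => c i ω = true)).card : ℝ) / n)
    (m : ℕ) (hm : k ≤ m) (s : ℕ → Bool) (ω : Ω) (hω : ω ∈ cylEvent c k m s) :
    R m ω = ((ℓ + ((Finset.Ico k m).filter fun i => s i = true).card : ℕ) : ℝ) / m := by
  rw [hR]
  congr 2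
  have hsplit : Finset.range m = Finset.range k ∪ Finset.Ico k m := by
    rw [Finset.range_eq_Ico, ← Finset.Ico_union_Ico_eq_Ico (Nat.zero_le k) hm, ← Finset.range_eq_Ico]
  rw [hsplit, Finset.filter_union, Finset.card_union_of_disjoint]
  · congr 1
    · have h1 : (Finset.range k).filter (fun i => c i ω = true) = Finset.range ℓ := by
        ext i
        simp only [Finset.mem_filter, Finset.mem_range]
        constructor
        · rintro ⟨hik, hc⟩
          rw [hinit i hik ω] at hc
          exact of_decide_eq_true hc
        · intro hiℓ
          exact ⟨lt_trans hiℓ hℓ, by rw [hinit i (lt_trans hiℓ hℓ) ω]; simp [hiℓ]⟩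
      rw [h1, Finset.card_range]
    · congr 1
      apply Finset.filter_congr
      intro i hi
      rw [hω i hi]
  · apply Finset.disjoint_filter_filter
    rw [Finset.range_eq_Ico]
    exact Finset.Ico_disjoint_Ico_consecutive 0 k m

lemma cyl_succ {Ω : Type*} (c : ℕ → Ω → Bool) (k m : ℕ) (hm : k ≤ m) (s : ℕ → Bool) :
    cylEvent c k (m+1) s = cylEvent c k m s ∩ {ω | c m ω = s m} := by
  ext ω
  simp only [cylEvent, Set.mem_inter_iff, Set.mem_setOf_eq]
  constructor
  · intro h
    exact ⟨fun i hi => h i (Finset.mem_Ico.mpr ⟨(Finset.mem_Ico.mp hi).1,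
      Nat.lt_succ_of_lt (Finset.mem_Ico.mp hi).2⟩), h m (Finset.mem_Ico.mpr ⟨hm, Nat.lt_succ_self m⟩)⟩
  · rintro ⟨h1, h2⟩ i hi
    rcases Finset.mem_Ico.mp hi with ⟨hki, him⟩
    rcases Nat.lt_succ_iff_lt_or_eq.mp him with h | h
    · exact h1 i (Finset.mem_Ico.mpr ⟨hki, h⟩)
    · subst h; exact h2

lemma cyl_step {Ω : Type*} [MeasurableSpace Ω] (μ : Measure Ω) [IsProbabilityMeasure μ]
    (k ℓ : ℕ) (hℓ : ℓ < k) (p : ℝ)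
    (c : ℕ → Ω → Bool) (hmeas : ∀ i, Measurable (c i))
    (hinit : ∀ i < k, ∀ ω, c i ω = decide (i < ℓ))
    (R : ℕ → Ω → ℝ)
    (hR : ∀ n ω, R n ω =
      (((Finset.range n).filter (fun i => c i ω = true)).card : ℝ) / n)
    (hcond : ∀ n, k ≤ n → ∀ A : Set Ω,
      MeasurableSet[MeasurableSpace.comap (fun ω (i : Fin n) => c i ω)
        inferInstance] A →
      (μ (A ∩ {ω | c n ω = true})).toReal =
        ∫ ω in A, binTail k ((1 - 2 * p) * R n ω + p) ∂μ)
    (m : ℕ) (hm : k ≤ m) (s : ℕ → Bool) :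
    (μ (cylEvent c k (m+1) s)).toReal =
      (μ (cylEvent c k m s)).toReal *
        (if s m = true then
          binTail k ((1 - 2*p) * (((ℓ + ((Finset.Ico k m).filter fun i => s i = true).card : ℕ) : ℝ) / m) + p)
        else
          1 - binTail k ((1 - 2*p) * (((ℓ + ((Finset.Ico k m).filter fun i => s i = true).card : ℕ) : ℝ) / m) + p)) := by
  set A := cylEvent c k m s with hA
  set q := binTail k ((1 - 2*p) * (((ℓ + ((Finset.Ico k m).filter fun i => s i = true).card : ℕ) : ℝ) / m) + p) with hq
  have hAm : MeasurableSet A := cyl_measurableSet c hmeas k m s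
  have htrue : (μ (A ∩ {ω | c m ω = true})).toReal = (μ A).toReal * q := by
    rw [hcond m hm A (cyl_comap c k m m le_rfl s)]
    rw [setIntegral_congr_fun hAm (g := fun _ => q)
      (fun ω hω => by rw [R_on_cyl c k ℓ hℓ hinit R hR m hm s ω hω])]
    rw [setIntegral_const, smul_eq_mul]
    rfl
  have hmt : MeasurableSet {ω | c m ω = true} := (hmeas m) (measurableSet_singleton _)
  have hsucc := cyl_succ c k m hm s
  by_cases hs : s m = true
  · rw [if_pos hs, hsucc, hs]
    exact htrue
  · rw [if_neg hs, hsucc]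
    have hs' : s m = false := by
      cases hb : s m
      · rfl
      · exact absurd hb hs
    rw [hs']
    have hbool : ∀ b : Bool, (b = false) ↔ ¬(b = true) := by decide
    have hdiff : A ∩ {ω | c m ω = false} = A \ {ω | c m ω = true} := by
      ext ω
      simp only [Set.mem_inter_iff, Set.mem_setOf_eq, Set.mem_diff, hbool]
    rw [hdiff]
    have hadd : μ (A ∩ {ω | c m ω = true}) + μ (A \ {ω | c m ω = true}) = μ A :=
      measure_inter_add_diff A hmt
    have h1 : (μ (A ∩ {ω | c m ω = true})).toReal + (μ (A \ {ω | c m ω = true})).toReal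
        = (μ A).toReal := by
      rw [← ENNReal.toReal_add (measure_ne_top μ _) (measure_ne_top μ _), hadd]
    rw [htrue] at h1
    linarith

/-- Lower bound on the probability of error of the majority rule in the
broadcasting process on a uniform random recursive k-DAG.  The process is
described by the colors `c i : Ω → Bool` (`true` = red) of the vertices:
the first `k` vertices are the roots, `ℓ` of which are red; for `n ≥ k`, given
the past, vertex `n` is red with probability `P{Bin(k, f(R_n)) ≥ (k+1)/2}`
where `R_n` is the fraction of red vertices among the first `n` and
`f(t) = (1-2p)t + p`.  Since red is the initial majority (`ℓ > k/2`), the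
probability that the majority at time `n` differs from the initial majority
(breaking ties with a fair coin) is
`μ{R_n < 1/2} + (1/2)·μ{R_n = 1/2}`, and it is at least `(1/2)·h_k^{2ℓ−k}`. -/
theorem majority_error_lower_bound
    {Ω : Type*} [MeasurableSpace Ω] (μ : Measure Ω) [IsProbabilityMeasure μ]
    (k ℓ : ℕ) (hk : Odd k) (hℓ₁ : k < 2 * ℓ) (hℓ₂ : ℓ < k)
    (p : ℝ) (hp : p ∈ Set.Icc (0 : ℝ) 1)
    (c : ℕ → Ω → Bool) (hmeas : ∀ i, Measurable (c i))
    (hinit : ∀ i < k, ∀ ω, c i ω = decide (i < ℓ))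
    (R : ℕ → Ω → ℝ)
    (hR : ∀ n ω, R n ω =
      (((Finset.range n).filter (fun i => c i ω = true)).card : ℝ) / n)
    (hcond : ∀ n, k ≤ n → ∀ A : Set Ω,
      MeasurableSet[MeasurableSpace.comap (fun ω (i : Fin n) => c i ω)
        inferInstance] A →
      (μ (A ∩ {ω | c n ω = true})).toReal =
        ∫ ω in A, binTail k ((1 - 2 * p) * R n ω + p) ∂μ)
    (n : ℕ) (hn : 2 * ℓ ≤ n) :
    (1 / 2) * hBeta k ^ (2 * ℓ - k) ≤
      (μ {ω | R n ω < 1 / 2}).toReal +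
        (1 / 2) * (μ {ω | R n ω = 1 / 2}).toReal := by
  obtain ⟨hp0, hp1⟩ := hp
  obtain ⟨e, he⟩ := hk
  have hk3 : 3 ≤ k := by omega
  have hk0 : 0 < k := by omega
  have hkodd : Odd k := ⟨e, he⟩
  -- Step 1: lower bound on the all-blue cylinder up to time 2ℓ
  have hlow : ∀ m, k ≤ m → m ≤ 2*ℓ →
      (hBeta k)^(m-k) ≤ (μ (cylEvent c k m (fun _ => false))).toReal := by
    intro m hm1
    induction m, hm1 using Nat.le_induction with
    | base =>
      intro _
      have huniv : cylEvent c k k (fun _ => false) = Set.univ := by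
        ext ω; simp [cylEvent]
      rw [huniv]
      simp
    | succ m hm ih =>
      intro hm2
      have ih' := ih (by omega)
      rw [cyl_step μ k ℓ hℓ₂ p c hmeas hinit R hR hcond m hm (fun _ => false)]
      have hfe : ((Finset.Ico k m).filter fun i => (fun _ : ℕ => false) i = true) = ∅ :=
        Finset.filter_eq_empty_iff.mpr (fun i _ => by simp)
      rw [if_neg (by simp), hfe]
      simp only [Finset.card_empty, Nat.add_zero]
      set t : ℝ := ((ℓ : ℕ) : ℝ) / (m : ℝ) with hts
      have hm0 : (0:ℝ) < m := by
        have : 0 < m := by omega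
        exact_mod_cast this
      have hk0' : (0:ℝ) < k := by exact_mod_cast hk0
      have ht0 : 0 ≤ t := div_nonneg (Nat.cast_nonneg ℓ) (le_of_lt hm0)
      have hkm : (k:ℝ) ≤ m := by exact_mod_cast hm
      have hℓk : (ℓ:ℝ) ≤ (k:ℝ) - 1 := by
        have : (ℓ:ℝ) + 1 ≤ (k:ℝ) := by exact_mod_cast hℓ₂
        linarith
      have ht1 : t ≤ 1 - 1/(k:ℝ) := by
        have h1 : t ≤ (ℓ:ℝ)/(k:ℝ) :=
          div_le_div_of_nonneg_left (Nat.cast_nonneg ℓ) hk0' hkm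
        have h2 : (ℓ:ℝ)/(k:ℝ) ≤ ((k:ℝ)-1)/(k:ℝ) :=
          (div_le_div_iff_of_pos_right hk0').mpr hℓk
        have h3 : ((k:ℝ)-1)/(k:ℝ) = 1 - 1/(k:ℝ) := by field_simp
        linarith
      have ht2 : 1/2 ≤ t := by
        rw [hts, le_div_iff₀ hm0]
        have : (m:ℝ) ≤ 2*ℓ - 1 := by
          have : m + 1 ≤ 2*ℓ := hm2
          have := (Nat.cast_le (α := ℝ)).mpr this
          push_cast at this
          linarith
        linarith
      have hx0 : 0 ≤ (1 - 2*p) * t + p := by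
        nlinarith [mul_nonneg ht0 (by linarith : (0:ℝ) ≤ 1-p),
          mul_nonneg hp0 (by linarith [ht1, one_div_nonneg.mpr (le_of_lt hk0')] : (0:ℝ) ≤ 1 - t)]
      have hx1 : (1 - 2*p) * t + p ≤ 1 - 1/(k:ℝ) := by
        nlinarith [mul_nonneg hp0 (by linarith : (0:ℝ) ≤ 2*t - 1)]
      have h1 : hBeta k ≤ 1 - binTail k ((1 - 2*p) * t + p) :=
        hBeta_le k hkodd hk0 _ hx0 hx1
      have hpow : (hBeta k)^(m+1-k) = (hBeta k)^(m-k) * hBeta k := by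
        rw [show m+1-k = (m-k)+1 by omega, pow_succ]
      rw [hpow]
      exact mul_le_mul ih' h1 (hBeta_nonneg k hkodd hk0) ENNReal.toReal_nonneg
  -- Step 2: symmetry
  have hk2ℓ : k ≤ 2*ℓ := by omega
  have hsym : ∀ m, 2*ℓ ≤ m → ∀ s : ℕ → Bool, (∀ i ∈ Finset.Ico k (2*ℓ), s i = false) →
      (μ (cylEvent c k m s)).toReal
        = (μ (cylEvent c k m (fun i => if i < 2*ℓ then s i else !(s i)))).toReal := by
    intro m hm1
    induction m, hm1 using Nat.le_induction with
    | base =>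
      intro s hs
      have : cylEvent c k (2*ℓ) s
          = cylEvent c k (2*ℓ) (fun i => if i < 2*ℓ then s i else !(s i)) := by
        apply cyl_congr
        intro i hi
        rw [if_pos (Finset.mem_Ico.mp hi).2]
      rw [this]
    | succ m hm ih =>
      intro s hs
      set s' : ℕ → Bool := fun i => if i < 2*ℓ then s i else !(s i) with hs'def
      have hkm : k ≤ m := le_trans hk2ℓ hm
      rw [cyl_step μ k ℓ hℓ₂ p c hmeas hinit R hR hcond m hkm s,
          cyl_step μ k ℓ hℓ₂ p c hmeas hinit R hR hcond m hkm s']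
      rw [← ih s hs]
      -- card computations
      have hsplitIco : Finset.Ico k m = Finset.Ico k (2*ℓ) ∪ Finset.Ico (2*ℓ) m :=
        (Finset.Ico_union_Ico_eq_Ico hk2ℓ hm).symm
      have hdisj : Disjoint (Finset.Ico k (2*ℓ)) (Finset.Ico (2*ℓ) m) :=
        Finset.Ico_disjoint_Ico_consecutive k (2*ℓ) m
      have hempty : ∀ u : ℕ → Bool, (∀ i ∈ Finset.Ico k (2*ℓ), u i = false) →
          ((Finset.Ico k m).filter fun i => u i = true).card
            = ((Finset.Ico (2*ℓ) m).filter fun i => u i = true).card := by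
        intro u hu
        rw [hsplitIco, Finset.filter_union,
          Finset.card_union_of_disjoint (Finset.disjoint_filter_filter hdisj)]
        have : (Finset.Ico k (2*ℓ)).filter (fun i => u i = true) = ∅ :=
          Finset.filter_eq_empty_iff.mpr (fun i hi => by rw [hu i hi]; simp)
        rw [this]
        simp
      have hs's : ∀ i ∈ Finset.Ico k (2*ℓ), s' i = false := by
        intro i hi
        simp only [hs'def, if_pos (Finset.mem_Ico.mp hi).2]
        exact hs i hi
      set a := ((Finset.Ico (2*ℓ) m).filter fun i => s i = true).card with hadef
      have hcards : ((Finset.Ico k m).filter fun i => s i = true).card = a := hempty s hs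
      have hfilts' : ((Finset.Ico (2*ℓ) m).filter fun i => s' i = true)
          = ((Finset.Ico (2*ℓ) m).filter fun i => ¬ (s i = true)) := by
        apply Finset.filter_congr
        intro i hi
        have hige : ¬ (i < 2*ℓ) := by
          have := (Finset.mem_Ico.mp hi).1; omega
        simp [hs'def, hige]
      have hcc : a + ((Finset.Ico (2*ℓ) m).filter fun i => ¬ (s i = true)).card
          = m - 2*ℓ := by
        rw [hadef, Finset.card_filter_add_card_filter_not, Nat.card_Ico]
      have ham : a ≤ m - 2*ℓ := by omega
      have hcards' : ((Finset.Ico k m).filter fun i => s' i = true).card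
          = m - 2*ℓ - a := by
        rw [hempty s' hs's, hfilts']
        omega
      rw [hcards, hcards']
      -- translate to real arithmetic
      have hm0 : (0:ℝ) < m := by
        have : 0 < m := by omega
        exact_mod_cast this
      have hfrac : ((ℓ + (m - 2*ℓ - a) : ℕ) : ℝ) / m = 1 - ((ℓ + a : ℕ) : ℝ) / m := by
        have h1 : (ℓ + (m - 2*ℓ - a)) + (ℓ + a) = m := by omega
        have h2 : (((ℓ + (m - 2*ℓ - a)) : ℕ) : ℝ) + ((ℓ + a : ℕ) : ℝ) = (m:ℝ) := by
          exact_mod_cast congrArg (Nat.cast : ℕ → ℝ) h1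
        field_simp
        linarith
      rw [hfrac]
      have hx : (1 - 2*p) * (1 - ((ℓ + a : ℕ) : ℝ) / m) + p
          = 1 - ((1 - 2*p) * (((ℓ + a : ℕ) : ℝ) / m) + p) := by ring
      rw [hx, binTail_one_sub k hkodd hk0]
      have hsm' : s' m = !(s m) := by
        simp only [hs'def, if_neg (by omega : ¬ (m < 2*ℓ))]
      by_cases hsm : s m = true
      · rw [if_pos hsm, if_neg (by rw [hsm'] ; simp [hsm])]
        ring
      · have hsmf : s m = false := by
          cases hb : s m
          · rfl
          · exact absurd hb hsm
        rw [if_neg hsm, if_pos (by rw [hsm', hsmf]; rfl)]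
  -- Step 3: assembly
  have hn0 : 0 < n := by omega
  have hkn : k ≤ n := by omega
  have hn0' : (0:ℝ) < n := by exact_mod_cast hn0
  set B : Set Ω := cylEvent c k (2*ℓ) (fun _ => false) with hBdef
  set Q : Finset ℕ := Finset.Ico (2*ℓ) n with hQdef
  set P : Finset (Finset ℕ) := Q.powerset with hPdef
  set CT : Finset ℕ → Set Ω := fun T => cylEvent c k n (fun i => decide (i ∈ T)) with hCTdef
  set g : Finset ℕ → ℝ := fun T => (μ (CT T)).toReal with hgdef
  have hTsub : ∀ T ∈ P, T ⊆ Q := fun T hT => Finset.mem_powerset.mp hT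
  have hfilterT : ∀ T ∈ P, ((Finset.Ico k n).filter fun i => decide (i ∈ T) = true) = T := by
    intro T hT
    ext i
    simp only [Finset.mem_filter, decide_eq_true_eq]
    constructor
    · rintro ⟨_, h⟩; exact h
    · intro h
      have h2 := Finset.mem_Ico.mp (hTsub T hT h)
      exact ⟨Finset.mem_Ico.mpr ⟨le_trans hk2ℓ h2.1, h2.2⟩, h⟩
  have hRconst : ∀ T ∈ P, ∀ ω ∈ CT T, R n ω = ((ℓ + T.card : ℕ) : ℝ) / n := by
    intro T hT ω hω
    rw [R_on_cyl c k ℓ hℓ₂ hinit R hR n hkn _ ω hω, hfilterT T hT]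
  have hmeasCT : ∀ T, MeasurableSet (CT T) := fun T => cyl_measurableSet c hmeas k n _
  have hdisjCT : (↑P : Set (Finset ℕ)).PairwiseDisjoint CT := by
    intro T hT T' hT' hne
    simp only [Function.onFun]
    rw [Set.disjoint_left]
    intro ω hω hω'
    apply hne
    ext i
    by_cases hi : i ∈ Q
    · have h2 := Finset.mem_Ico.mp hi
      have hiIco : i ∈ Finset.Ico k n := Finset.mem_Ico.mpr ⟨le_trans hk2ℓ h2.1, h2.2⟩
      have e1 : c i ω = decide (i ∈ T) := hω i hiIco
      have e2 : c i ω = decide (i ∈ T') := hω' i hiIco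
      have : decide (i ∈ T) = decide (i ∈ T') := by rw [← e1, ← e2]
      constructor
      · intro h; exact of_decide_eq_true (by rw [← this]; exact decide_eq_true h)
      · intro h; exact of_decide_eq_true (by rw [this]; exact decide_eq_true h)
    · constructor
      · intro h; exact absurd (hTsub T (by exact_mod_cast hT) h) hi
      · intro h; exact absurd (hTsub T' (by exact_mod_cast hT') h) hi
  have hunion : B = ⋃ T ∈ P, CT T := by
    apply Set.Subset.antisymm
    · intro ω hω
      set T : Finset ℕ := Q.filter (fun i => c i ω = true) with hTdef
      have hTP : T ∈ P := Finset.mem_powerset.mpr (Finset.filter_subset _ _)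
      refine Set.mem_biUnion hTP ?_
      intro i hiIco
      rcases Finset.mem_Ico.mp hiIco with ⟨hki, hin⟩
      by_cases h : i < 2*ℓ
      · have hc : c i ω = false := hω i (Finset.mem_Ico.mpr ⟨hki, h⟩)
        have hiT : i ∉ T := by
          intro hmem
          have := (Finset.mem_Ico.mp (Finset.filter_subset _ _ hmem)).1
          omega
        rw [hc]
        exact (decide_eq_false hiT).symm
      · have hiQ : i ∈ Q := Finset.mem_Ico.mpr ⟨by omega, hin⟩
        cases hb : c i ω
        · have hiT : i ∉ T := by
            intro hmem
            have := (Finset.mem_filter.mp hmem).2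
            rw [hb] at this
            exact Bool.false_ne_true this
          exact (decide_eq_false hiT).symm
        · have hiT : i ∈ T := Finset.mem_filter.mpr ⟨hiQ, hb⟩
          exact (decide_eq_true hiT).symm
    · intro ω hω
      rcases Set.mem_iUnion₂.mp hω with ⟨T, hT, hωT⟩
      intro i hi
      rcases Finset.mem_Ico.mp hi with ⟨hki, hi2ℓ⟩
      have hiIco : i ∈ Finset.Ico k n := Finset.mem_Ico.mpr ⟨hki, by omega⟩
      have hiT : i ∉ T := by
        intro hm
        have := (Finset.mem_Ico.mp (hTsub T hT hm)).1
        omega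
      rw [hωT i hiIco]
      exact decide_eq_false hiT
  have hsumB : (μ B).toReal = ∑ T ∈ P, g T := by
    rw [hunion, measure_biUnion_finset hdisjCT (fun T _ => hmeasCT T)]
    exact ENNReal.toReal_sum (fun T _ => measure_ne_top μ _)
  -- flip invariance
  have hflip : ∀ T ∈ P, g T = g (Q \ T) := by
    intro T hT
    have hcondT : ∀ i ∈ Finset.Ico k (2*ℓ), decide (i ∈ T) = false := by
      intro i hi
      apply decide_eq_false
      intro hm
      have := (Finset.mem_Ico.mp (hTsub T hT hm)).1
      have := (Finset.mem_Ico.mp hi).2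
      omega
    have h1 := hsym n hn (fun i => decide (i ∈ T)) hcondT
    have h2 : cylEvent c k n (fun i => if i < 2*ℓ then decide (i ∈ T) else !(decide (i ∈ T)))
        = CT (Q \ T) := by
      apply cyl_congr
      intro i hi
      rcases Finset.mem_Ico.mp hi with ⟨hki, hin⟩
      by_cases h : i < 2*ℓ
      · rw [if_pos h, hcondT i (Finset.mem_Ico.mpr ⟨hki, h⟩)]
        have : i ∉ Q \ T := by
          intro hm
          have := (Finset.mem_Ico.mp (Finset.mem_sdiff.mp hm).1).1
          omega
        exact (decide_eq_false this).symm
      · rw [if_neg h]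
        have hiQ : i ∈ Q := Finset.mem_Ico.mpr ⟨by omega, hin⟩
        by_cases hT' : i ∈ T
        · rw [decide_eq_true hT']
          have : i ∉ Q \ T := fun hm => (Finset.mem_sdiff.mp hm).2 hT'
          exact (decide_eq_false this).symm
        · rw [decide_eq_false hT']
          have : i ∈ Q \ T := Finset.mem_sdiff.mpr ⟨hiQ, hT'⟩
          exact (decide_eq_true this).symm
    rw [hgdef]
    simp only
    rw [← h2, ← h1]
  -- classification
  set P1 : Finset (Finset ℕ) := P.filter (fun T => 2*(ℓ + T.card) < n) with hP1def
  set P2 : Finset (Finset ℕ) := P.filter (fun T => 2*(ℓ + T.card) = n) with hP2def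
  set P3 : Finset (Finset ℕ) := P.filter (fun T => n < 2*(ℓ + T.card)) with hP3def
  have hsplitP : ∑ T ∈ P, g T = (∑ T ∈ P1, g T) + (∑ T ∈ P2, g T) + (∑ T ∈ P3, g T) := by
    rw [← Finset.sum_filter_add_sum_filter_not P (fun T => 2*(ℓ + T.card) < n) g]
    rw [← Finset.sum_filter_add_sum_filter_not (P.filter (fun T => ¬ 2*(ℓ + T.card) < n))
      (fun T => 2*(ℓ + T.card) = n) g]
    rw [Finset.filter_filter, Finset.filter_filter]
    have e2 : P.filter (fun T => ¬ 2*(ℓ + T.card) < n ∧ 2*(ℓ + T.card) = n) = P2 := by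
      apply Finset.filter_congr
      intro T _
      constructor
      · rintro ⟨_, h⟩; exact h
      · intro h; omega
    have e3 : P.filter (fun T => ¬ 2*(ℓ + T.card) < n ∧ ¬ 2*(ℓ + T.card) = n) = P3 := by
      apply Finset.filter_congr
      intro T _
      constructor
      · rintro ⟨h1, h2⟩; omega
      · intro h; omega
    rw [e2, e3]
    ring
  have hcardQ : Q.card = n - 2*ℓ := by rw [hQdef, Nat.card_Ico]
  have hP3P1 : ∑ T ∈ P3, g T = ∑ T ∈ P1, g T := by
    apply Finset.sum_nbij' (i := fun T => Q \ T) (j := fun T => Q \ T)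
    · intro T hT
      rcases Finset.mem_filter.mp hT with ⟨hTP, hTgt⟩
      have hsubQ := hTsub T hTP
      have hc : (Q \ T).card = Q.card - T.card := Finset.card_sdiff_of_subset hsubQ
      have hle : T.card ≤ Q.card := Finset.card_le_card hsubQ
      refine Finset.mem_filter.mpr ⟨Finset.mem_powerset.mpr (Finset.sdiff_subset), ?_⟩
      omega
    · intro T hT
      rcases Finset.mem_filter.mp hT with ⟨hTP, hTlt⟩
      have hsubQ := hTsub T hTP
      have hc : (Q \ T).card = Q.card - T.card := Finset.card_sdiff_of_subset hsubQ
      have hle : T.card ≤ Q.card := Finset.card_le_card hsubQ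
      refine Finset.mem_filter.mpr ⟨Finset.mem_powerset.mpr (Finset.sdiff_subset), ?_⟩
      omega
    · intro T hT
      rcases Finset.mem_filter.mp hT with ⟨hTP, _⟩
      exact Finset.sdiff_sdiff_eq_self (hTsub T hTP)
    · intro T hT
      rcases Finset.mem_filter.mp hT with ⟨hTP, _⟩
      exact Finset.sdiff_sdiff_eq_self (hTsub T hTP)
    · intro T hT
      exact hflip T (Finset.mem_filter.mp hT).1
  -- event inclusions
  have hinc : ∀ (Psub : Finset (Finset ℕ)) (E : Set Ω), Psub ⊆ P → MeasurableSet E →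
      (∀ T ∈ Psub, CT T ⊆ E) → ∑ T ∈ Psub, g T ≤ (μ E).toReal := by
    intro Psub E hPsub hE hsubE
    have h1 : μ (⋃ T ∈ Psub, CT T) = ∑ T ∈ Psub, μ (CT T) :=
      measure_biUnion_finset (hdisjCT.subset (by exact_mod_cast hPsub)) (fun T _ => hmeasCT T)
    have h2 : ∑ T ∈ Psub, g T = (μ (⋃ T ∈ Psub, CT T)).toReal := by
      rw [h1]
      exact (ENNReal.toReal_sum (fun T _ => measure_ne_top μ _)).symm
    rw [h2]
    exact ENNReal.toReal_mono (measure_ne_top μ _) (measure_mono (Set.iUnion₂_subset hsubE))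
  have hRmeas : Measurable (R n) := by
    have hrepr : R n = fun ω => (∑ i ∈ Finset.range n, (if c i ω = true then (1:ℝ) else 0)) / n := by
      funext ω
      rw [hR n ω]
      congr 1
      rw [Finset.card_filter]
      push_cast
      rfl
    rw [hrepr]
    apply Measurable.div_const
    apply Finset.measurable_sum
    intro i _
    exact Measurable.ite ((hmeas i) (measurableSet_singleton _)) measurable_const measurable_const
  have hmeas_lt : MeasurableSet {ω | R n ω < 1/2} := measurableSet_lt hRmeas measurable_const
  have hmeas_eq : MeasurableSet {ω | R n ω = 1/2} := hRmeas (measurableSet_singleton _)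
  have hlt : ∑ T ∈ P1, g T ≤ (μ {ω | R n ω < 1/2}).toReal := by
    apply hinc P1 _ (Finset.filter_subset _ _) hmeas_lt
    intro T hT ω hω
    rcases Finset.mem_filter.mp hT with ⟨hTP, hTlt⟩
    have hr := hRconst T hTP ω hω
    simp only [Set.mem_setOf_eq]
    rw [hr, div_lt_div_iff₀ hn0' (by norm_num : (0:ℝ) < 2)]
    have hcast : ((2*(ℓ + T.card) : ℕ) : ℝ) < ((n:ℕ) : ℝ) := by exact_mod_cast hTlt
    push_cast at hcast ⊢
    linarith
  have heqq : ∑ T ∈ P2, g T ≤ (μ {ω | R n ω = 1/2}).toReal := by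
    apply hinc P2 _ (Finset.filter_subset _ _) hmeas_eq
    intro T hT ω hω
    rcases Finset.mem_filter.mp hT with ⟨hTP, hTeq⟩
    have hr := hRconst T hTP ω hω
    simp only [Set.mem_setOf_eq]
    rw [hr, div_eq_div_iff (ne_of_gt hn0') (by norm_num : (2:ℝ) ≠ 0)]
    have hcast : ((2*(ℓ + T.card) : ℕ) : ℝ) = ((n:ℕ) : ℝ) := by exact_mod_cast hTeq
    push_cast at hcast ⊢
    linarith
  have hBlow : hBeta k ^ (2*ℓ - k) ≤ (μ B).toReal := hlow (2*ℓ) hk2ℓ le_rfl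
  linarith [hlt, heqq, hBlow, hsumB, hsplitP, hP3P1]
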